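/- arXiv:2003.00276 — 2 statements merged into one kernel-verified Lean document; each statement's English description precedes it below -/
import Mathlib

section
/- Let M ≥ 1, let ν be a compactly supported probability measure on Ω, and let V : (Fin K → ℝ) → ℝ be (M+1)-times continuously differentiable on all of (Fin K → ℝ). Define the average structural function Ȳ_k(x) := ∫ ∂_k V (u(x, β)) dν(β). Then for each good k, Ȳ_k is M-times continuously differentiable on a neighborhood of x = 0, and for all tuples γ : Fin M → Fin K and ξ with ξ m : Fin (d (γ m)), the iterated partial derivative of Ȳ_k at 0 with respect to the covariate coordinates (γ 0, ξ 0), …, (γ (M−1), ξ (M−1)) equals ∂_{(γ,k)} V(0) · moment_ν(τ), where τ is the M-tuple τ m = ⟨γ m, ξ m⟩ and (γ,k) appends k to γ. (Lemma: derivatives of the average structural function at zero covariates equal a derivative of V at 0 times a moment of the random coefficients.) -/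
open MeasureTheory

/-- The space of coefficient / covariate vectors: one vector of characteristics per good. -/
abbrev Coeff (K : ℕ) (d : Fin K → ℕ) := ∀ k : Fin K, Fin (d k) → ℝ

/-- Iterated partial derivative of `V` at the origin along coordinate directions `γ 0, …, γ (n-1)`. -/
noncomputable def dV {K : ℕ} (n : ℕ) (V : (Fin K → ℝ) → ℝ) (γ : Fin n → Fin K) : ℝ :=
  iteratedFDeriv ℝ n V 0 fun i => Pi.single (γ i) 1

/-- Partial derivative of `V` in its `k`-th coordinate. -/
noncomputable def pV {K : ℕ} (V : (Fin K → ℝ) → ℝ) (k : Fin K) : (Fin K → ℝ) → ℝ :=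
  fun w => fderiv ℝ V w (Pi.single k 1)

/-- The utility index map `u(x, β) k = ∑ ℓ, β k ℓ * x k ℓ`. -/
def idx {K : ℕ} {d : Fin K → ℕ} (x β : Coeff K d) : Fin K → ℝ :=
  fun k => ∑ ℓ : Fin (d k), β k ℓ * x k ℓ

/-- Iterated partial derivative at `x = 0` of a function of covariates, along the covariate
coordinates `(τ m).1, (τ m).2`. -/
noncomputable def dOmega {K : ℕ} {d : Fin K → ℕ} (M : ℕ) (g : Coeff K d → ℝ)
    (τ : Fin M → Σ k : Fin K, Fin (d k)) : ℝ :=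
  iteratedFDeriv ℝ M g 0 fun m => Pi.single (τ m).1 (Pi.single (τ m).2 1)

/-- The `M`-th order moment of a measure `ν` on coefficient space at the tuple `τ`. -/
noncomputable def moment {K : ℕ} {d : Fin K → ℕ} {M : ℕ}
    (ν : Measure (Coeff K d)) (τ : Fin M → Σ k : Fin K, Fin (d k)) : ℝ :=
  ∫ β, ∏ m : Fin M, β (τ m).1 (τ m).2 ∂ν


open MeasureTheory Metric Set

set_option maxHeartbeats 1000000
set_option synthInstance.maxHeartbeats 1000000

section Aux

variable {F : Type} [NormedAddCommGroup F] [NormedSpace ℝ F]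
  [MeasurableSpace F] [OpensMeasurableSpace F] [SecondCountableTopology F]
  {μ : Measure F} [IsFiniteMeasure μ] {C : Set F}

lemma integrable_of_cont (hC : IsCompact C) (hμ : μ Cᶜ = 0)
    {G : Type*} [NormedAddCommGroup G] {g : F → G} (hg : Continuous g) :
    Integrable g μ := by
  obtain ⟨R, hR⟩ := hC.exists_bound_of_continuousOn hg.continuousOn
  refine Integrable.mono' (integrable_const R) hg.aestronglyMeasurable ?_
  refine ae_iff.2 (measure_mono_null (fun β hβ => ?_) hμ)
  simp only [mem_setOf_eq, not_le] at hβ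
  exact fun hβC => absurd (hR β hβC) (not_le.2 hβ)

variable {E : Type} [NormedAddCommGroup E] [NormedSpace ℝ E] [ProperSpace E]

lemma lemA (hC : IsCompact C) (hμ : μ Cᶜ = 0) :
    ∀ (n : ℕ) {G : Type} [NormedAddCommGroup G] [NormedSpace ℝ G] [CompleteSpace G]
      (f : E × F → G), ContDiff ℝ n f →
      Continuous (fun p : E × F => iteratedFDeriv ℝ n (fun x => f (x, p.2)) p.1) ∧
      ContDiff ℝ n (fun x => ∫ β, f (x, β) ∂μ) ∧
      ∀ x₀ : E, iteratedFDeriv ℝ n (fun x => ∫ β, f (x, β) ∂μ) x₀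
          = ∫ β, iteratedFDeriv ℝ n (fun x => f (x, β)) x₀ ∂μ := by
  intro n
  induction n with
  | zero =>
    intro G _ _ _ f hf
    have hc0 : Continuous (fun p : E × F => iteratedFDeriv ℝ 0 (fun x => f (x, p.2)) p.1) := by
      simp only [iteratedFDeriv_zero_eq_comp, Function.comp_apply]
      exact (continuousMultilinearCurryFin0 ℝ E G).symm.continuous.comp hf.continuous
    refine ⟨hc0, ?_, ?_⟩
    · rw [show ((0:ℕ) : WithTop ℕ∞) = 0 from rfl, contDiff_zero]
      refine continuous_iff_continuousAt.2 fun x₀ => ?_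
      obtain ⟨R, hR⟩ := ((isCompact_closedBall x₀ 1).prod hC).exists_bound_of_continuousOn
        hf.continuous.continuousOn
      refine continuousAt_of_dominated
        (.of_forall fun x => (hf.continuous.comp (Continuous.prodMk_right x)).aestronglyMeasurable)
        ?_ (integrable_const R) (.of_forall fun β =>
          (hf.continuous.comp (continuous_id.prodMk continuous_const)).continuousAt)
      filter_upwards [ball_mem_nhds x₀ one_pos] with x hx
      refine ae_iff.2 (measure_mono_null (fun β hβ => ?_) hμ)
      simp only [mem_setOf_eq, not_le] at hβ
      exact fun hβC => absurd (hR (x, β) ⟨ball_subset_closedBall hx, hβC⟩) (not_le.2 hβ)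
    · intro x₀
      have hint : Integrable (fun β => iteratedFDeriv ℝ 0 (fun x => f (x, β)) x₀) μ :=
        integrable_of_cont hC hμ (hc0.comp (continuous_const.prodMk continuous_id))
      refine ContinuousMultilinearMap.ext fun m => ?_
      have h2 := (ContinuousMultilinearMap.apply ℝ (fun _ : Fin 0 => E) G m).integral_comp_comm hint
      simp only [ContinuousMultilinearMap.apply_apply] at h2
      rw [← h2]
      simp only [iteratedFDeriv_zero_apply]
  | succ n IH =>
    intro G _ _ _ f hf
    have hfd : Differentiable ℝ f :=
      hf.differentiable (by simp)
    set f' : E × F → (E →L[ℝ] G) :=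
      fun p => (fderiv ℝ f p).comp (ContinuousLinearMap.inl ℝ E F) with hf'def
    have hf' : ContDiff ℝ n f' := by
      have h1 : ContDiff ℝ n (fderiv ℝ f) := hf.fderiv_right (by exact_mod_cast le_rfl)
      exact (((ContinuousLinearMap.compL ℝ E (E × F) G).flip
        (ContinuousLinearMap.inl ℝ E F)).contDiff).comp h1
    have key : ∀ (β : F) (x : E), HasFDerivAt (fun y => f (y, β)) (f' (x, β)) x :=
      fun β x => ((hfd (x, β)).hasFDerivAt).comp x (hasFDerivAt_prodMk_left x β)
    obtain ⟨hc', ha', hb'⟩ := IH f' hf'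
    have hslice : ∀ β : F, (fderiv ℝ (fun x => f (x, β))) = fun x => f' (x, β) :=
      fun β => funext fun x => (key β x).fderiv
    -- derivative of the integral
    have hkey : ∀ x₀ : E, HasFDerivAt (fun x => ∫ β, f (x, β) ∂μ)
        (∫ β, f' (x₀, β) ∂μ) x₀ := by
      intro x₀
      obtain ⟨R, hR⟩ := ((isCompact_closedBall x₀ 1).prod hC).exists_bound_of_continuousOn
        (hf'.continuous.continuousOn)
      refine hasFDerivAt_integral_of_dominated_of_fderiv_le (𝕜 := ℝ) (F := fun x β => f (x, β)) (F' := fun x β => f' (x, β)) (bound := fun _ => R) (ball_mem_nhds x₀ one_pos)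
        (.of_forall fun x => (hf.continuous.comp (Continuous.prodMk_right x)).aestronglyMeasurable)
        (integrable_of_cont hC hμ (hf.continuous.comp (Continuous.prodMk_right x₀)))
        ((hf'.continuous.comp (Continuous.prodMk_right x₀)).aestronglyMeasurable)
        ?_ (integrable_const R) ?_
      · refine ae_iff.2 (measure_mono_null (fun β hβ => ?_) hμ)
        simp only [mem_setOf_eq, not_forall] at hβ
        obtain ⟨x, hx, hβ⟩ := hβ
        exact fun hβC => absurd (hR (x, β) ⟨ball_subset_closedBall hx, hβC⟩) hβ
      · exact .of_forall fun β x _ => key β x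
    have hc : Continuous
        (fun p : E × F => iteratedFDeriv ℝ (n + 1) (fun x => f (x, p.2)) p.1) := by
      have : (fun p : E × F => iteratedFDeriv ℝ (n + 1) (fun x => f (x, p.2)) p.1)
          = fun p => (continuousMultilinearCurryRightEquiv' ℝ n E G).symm
              (iteratedFDeriv ℝ n (fun x => f' (x, p.2)) p.1) := by
        funext p
        rw [iteratedFDeriv_succ_eq_comp_right]
        simp only [Function.comp_apply, hslice p.2]
      rw [this]
      exact (LinearIsometryEquiv.continuous _).comp hc'
    have hIf' : (fderiv ℝ (fun x => ∫ β, f (x, β) ∂μ)) = fun x₀ => ∫ β, f' (x₀, β) ∂μ :=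
      funext fun x₀ => (hkey x₀).fderiv
    refine ⟨hc, ?_, ?_⟩
    · rw [show ((n + 1 : ℕ) : WithTop ℕ∞) = (n : WithTop ℕ∞) + 1 by push_cast; rfl,
        contDiff_succ_iff_fderiv]
      refine ⟨fun x => (hkey x).differentiableAt, ?_, ?_⟩
      · intro h
        exact absurd h (by simp)
      · rw [hIf']; exact ha'
    · intro x₀
      have hint' : Integrable (fun β => iteratedFDeriv ℝ n (fun x => f' (x, β)) x₀) μ :=
        integrable_of_cont hC hμ (hc'.comp (continuous_const.prodMk continuous_id))
      have hint : Integrable (fun β => iteratedFDeriv ℝ (n + 1) (fun x => f (x, β)) x₀) μ :=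
        integrable_of_cont hC hμ (hc.comp (continuous_const.prodMk continuous_id))
      refine ContinuousMultilinearMap.ext fun m => ?_
      -- RHS applied
      have hR2 := (ContinuousMultilinearMap.apply ℝ (fun _ : Fin (n+1) => E) G m).integral_comp_comm hint
      simp only [ContinuousMultilinearMap.apply_apply] at hR2
      rw [← hR2]
      -- LHS
      rw [iteratedFDeriv_succ_apply_right, hIf', hb' x₀]
      have hL2 := ((ContinuousLinearMap.apply ℝ G (m (Fin.last n))).comp
        (ContinuousMultilinearMap.apply ℝ (fun _ : Fin n => E) (E →L[ℝ] G)
          (Fin.init m))).integral_comp_comm hint'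
      simp only [ContinuousLinearMap.coe_comp', Function.comp_apply,
        ContinuousMultilinearMap.apply_apply, ContinuousLinearMap.apply_apply] at hL2
      rw [← hL2]
      congr 1
      funext β
      rw [iteratedFDeriv_succ_apply_right, hslice β]

end Aux

section Main

variable {K : ℕ} {d : Fin K → ℕ}

/-- `idx · β` as a continuous linear map. -/
noncomputable def idxL (β : Coeff K d) : Coeff K d →L[ℝ] (Fin K → ℝ) :=
  LinearMap.toContinuousLinearMap
    { toFun := fun x => idx x β
      map_add' := by
        intro x y
        funext j
        simp [idx, mul_add, Finset.sum_add_distrib]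
      map_smul' := by
        intro c x
        funext j
        simp only [idx, Pi.smul_apply, smul_eq_mul, RingHom.id_apply, Finset.mul_sum]
        exact Finset.sum_congr rfl fun ℓ _ => by ring }

lemma idxL_apply (β x : Coeff K d) : idxL β x = idx x β := rfl

lemma idxL_single (β : Coeff K d) (a : Fin K) (b : Fin (d a)) :
    idxL β (Pi.single a (Pi.single b 1)) = β a b • (Pi.single a 1 : Fin K → ℝ) := by
  funext j
  rw [idxL_apply]
  rcases eq_or_ne j a with rfl | hja
  · simp [idx, Pi.single_apply, mul_ite]
  · simp [idx, Pi.single_eq_of_ne hja, hja]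

theorem stmt8' {K : ℕ} (hK : 0 < K) {d : Fin K → ℕ} (hd : ∀ k, 0 < d k)
    (M : ℕ) (hM : 1 ≤ M)
    (ν : Measure (Coeff K d)) [IsProbabilityMeasure ν]
    (hνc : ∃ C : Set (Coeff K d), IsCompact C ∧ ν Cᶜ = 0)
    (V : (Fin K → ℝ) → ℝ) (hV : ContDiff ℝ (M + 1) V)
    (Ybar : Fin K → Coeff K d → ℝ)
    (hYbar : ∀ k x, Ybar k x = ∫ β, pV V k (idx x β) ∂ν) :
    ∀ k : Fin K,
      (∃ U ∈ nhds (0 : Coeff K d), ContDiffOn ℝ M (Ybar k) U) ∧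
      ∀ (γ : Fin M → Fin K) (ξ : ∀ m, Fin (d (γ m))),
        dOmega M (Ybar k) (fun m => ⟨γ m, ξ m⟩)
          = dV (M + 1) V (Fin.snoc γ k) * moment ν (fun m => ⟨γ m, ξ m⟩) := by
  obtain ⟨C, hC, hμ⟩ := hνc
  intro k
  have hVd : ContDiff ℝ M (fderiv ℝ V) := hV.fderiv_right le_rfl
  have hg : ContDiff ℝ M (pV V k) := by
    unfold pV
    exact hVd.clm_apply contDiff_const
  have hidx : ContDiff ℝ M (fun p : Coeff K d × Coeff K d => idx p.1 p.2) := by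
    apply contDiff_pi.2
    intro j
    simp only [idx]
    refine ContDiff.sum fun ℓ _ => ContDiff.mul ?_ ?_
    · exact (((ContinuousLinearMap.proj ℓ).comp ((ContinuousLinearMap.proj j).comp
          (ContinuousLinearMap.snd ℝ (Coeff K d) (Coeff K d))) :
          (Coeff K d × Coeff K d) →L[ℝ] ℝ)).contDiff
    · exact (((ContinuousLinearMap.proj ℓ).comp ((ContinuousLinearMap.proj j).comp
          (ContinuousLinearMap.fst ℝ (Coeff K d) (Coeff K d))) :
          (Coeff K d × Coeff K d) →L[ℝ] ℝ)).contDiff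
  have hf : ContDiff ℝ M (fun p : Coeff K d × Coeff K d => pV V k (idx p.1 p.2)) :=
    hg.comp hidx
  obtain ⟨hc, ha, hb⟩ := lemA hC hμ M _ hf
  have hYb : Ybar k = fun x => ∫ β, pV V k (idx x β) ∂ν := funext fun x => hYbar k x
  constructor
  · exact ⟨Set.univ, Filter.univ_mem, by rw [hYb]; exact ha.contDiffOn⟩
  · intro γ ξ
    have hint : Integrable (fun β => iteratedFDeriv ℝ M (fun x => pV V k (idx x β)) 0) ν :=
      integrable_of_cont hC hμ (hc.comp (continuous_const.prodMk continuous_id))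
    set A : ℝ := iteratedFDeriv ℝ M (pV V k) 0 (fun i => (Pi.single (γ i) 1 : Fin K → ℝ)) with hA
    set mvec : Fin M → Coeff K d := fun i => Pi.single (γ i) (Pi.single (ξ i) 1) with hmvec
    have h2 := (ContinuousMultilinearMap.apply ℝ (fun _ : Fin M => Coeff K d) ℝ
      mvec).integral_comp_comm hint
    simp only [ContinuousMultilinearMap.apply_apply] at h2
    have hpt : ∀ β : Coeff K d,
        iteratedFDeriv ℝ M (fun x => pV V k (idx x β)) 0 mvec
          = (∏ i, β (γ i) (ξ i)) • A := by
      intro β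
      have hcomp : (fun x : Coeff K d => pV V k (idx x β)) = (pV V k) ∘ (idxL β) := rfl
      rw [hcomp, ContinuousLinearMap.iteratedFDeriv_comp_right (idxL β) hg 0
        (by exact_mod_cast le_rfl)]
      rw [ContinuousMultilinearMap.compContinuousLinearMap_apply]
      rw [map_zero]
      have hsing : (fun i => idxL β (mvec i))
          = fun i => β (γ i) (ξ i) • (Pi.single (γ i) 1 : Fin K → ℝ) :=
        funext fun i => idxL_single β (γ i) (ξ i)
      rw [hsing, ContinuousMultilinearMap.map_smul_univ]
    have hAd : dV (M + 1) V (Fin.snoc γ k) = A := by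
      have hpV : pV V k = (ContinuousLinearMap.apply ℝ ℝ (Pi.single k 1)) ∘ (fderiv ℝ V) := rfl
      rw [hA, hpV, ContinuousLinearMap.iteratedFDeriv_comp_left _ (hVd.contDiffAt (x := 0))
        (by exact_mod_cast le_rfl)]
      simp only [ContinuousLinearMap.compContinuousMultilinearMap_coe, Function.comp_apply,
        ContinuousLinearMap.apply_apply]
      have hinit : Fin.init (fun i : Fin (M+1) => (Pi.single ((Fin.snoc γ k : Fin (M+1) → Fin K) i) 1 : Fin K → ℝ))
          = fun i : Fin M => (Pi.single (γ i) 1 : Fin K → ℝ) := by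
        funext i
        simp [Fin.init]
      rw [dV, iteratedFDeriv_succ_apply_right, hinit]
      simp only [Fin.snoc_last]
    have hgoal : dOmega M (Ybar k) (fun m => ⟨γ m, ξ m⟩)
        = ∫ β, iteratedFDeriv ℝ M (fun x => pV V k (idx x β)) 0 mvec ∂ν := by
      rw [dOmega, hYb, hb 0, ← h2]
    rw [hgoal]
    simp_rw [hpt]
    rw [integral_smul_const, hAd, smul_eq_mul, mul_comm]
    rfl

end Main

/-- Lemma: derivatives of the average structural function at zero covariates equal a
derivative of `V` at `0` times a moment of the random coefficients. -/
theorem stmt8 {K : ℕ} (hK : 0 < K) {d : Fin K → ℕ} (hd : ∀ k, 0 < d k)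
    (M : ℕ) (hM : 1 ≤ M)
    (ν : Measure (Coeff K d)) [IsProbabilityMeasure ν]
    (hνc : ∃ C : Set (Coeff K d), IsCompact C ∧ ν Cᶜ = 0)
    (V : (Fin K → ℝ) → ℝ) (hV : ContDiff ℝ (M + 1) V)
    (Ybar : Fin K → Coeff K d → ℝ)
    (hYbar : ∀ k x, Ybar k x = ∫ β, pV V k (idx x β) ∂ν) :
    ∀ k : Fin K,
      (∃ U ∈ nhds (0 : Coeff K d), ContDiffOn ℝ M (Ybar k) U) ∧
      ∀ (γ : Fin M → Fin K) (ξ : ∀ m, Fin (d (γ m))),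
        dOmega M (Ybar k) (fun m => ⟨γ m, ξ m⟩)
          = dV (M + 1) V (Fin.snoc γ k) * moment ν (fun m => ⟨γ m, ξ m⟩) :=
  stmt8' hK hd M hM ν hνc V hV Ybar hYbar
end

section
/- Let M ≥ 1, let ν be a compactly supported probability measure on Ω, and let V : (Fin K → ℝ) → ℝ be (M+1)-times continuously differentiable on all of (Fin K → ℝ). Define Ȳ_k(x) := ∫ ∂_k V (u(x, β)) dν(β). Then for every M-tuple (γ, ξ) of good and characteristic indices and every good k with ∂_{(γ,k)} V(0) ≠ 0, the M-th order moment moment_ν(γ,ξ) equals ∂_{(γ,ξ)} Ȳ_k(0) / ∂_{(γ,k)} V(0), where (γ,k) is the (M+1)-tuple of good indices appending k to γ and ∂_{(γ,ξ)} Ȳ_k(0) is the iterated partial derivative of Ȳ_k at x = 0 with respect to the covariate coordinates (γ m, ξ m). (Proposition: when the integrated indirect utility V is known, every M-th order moment of the random coefficients is identified by a ratio of derivatives.) -/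
set_option synthInstance.maxHeartbeats 1000000
set_option maxHeartbeats 1000000
set_option linter.unusedSectionVars false
set_option linter.unusedVariables false

open MeasureTheory

section Auxiliary

open Metric Set Fin

universe u
variable {E : Type u} {A : Type u}
  [NormedAddCommGroup E] [NormedSpace ℝ E]
  [NormedAddCommGroup A] [NormedSpace ℝ A]

lemma slice_hasFDerivAt {G : Type u} [NormedAddCommGroup G] [NormedSpace ℝ G]
    {F : E × A → G} (hF : Differentiable ℝ F) (x : E) (β : A) :
    HasFDerivAt (fun x => F (x, β))
      ((fderiv ℝ F (x, β)).comp (ContinuousLinearMap.inl ℝ E A)) x :=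
  ((hF (x, β)).hasFDerivAt).comp x (hasFDerivAt_prodMk_left x β)

lemma slice_iteratedFDeriv :
    ∀ (n : ℕ) {G : Type u} [NormedAddCommGroup G] [NormedSpace ℝ G]
      (F : E × A → G), ContDiff ℝ n F → ∀ (x : E) (β : A),
      iteratedFDeriv ℝ n (fun x => F (x, β)) x =
        (iteratedFDeriv ℝ n F (x, β)).compContinuousLinearMap
          (fun _ => ContinuousLinearMap.inl ℝ E A) := by
  intro n
  induction n with
  | zero =>
    intro G _ _ F hF x β
    ext m
    simp
  | succ n IH =>
    intro G _ _ F hF x β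
    have h1 : (1 : WithTop ℕ∞) ≤ ((n+1 : ℕ) : WithTop ℕ∞) := by
      exact_mod_cast Nat.one_le_iff_ne_zero.mpr n.succ_ne_zero
    have hFd : Differentiable ℝ F := hF.differentiable (by exact_mod_cast n.succ_ne_zero)
    have hdF : ContDiff ℝ n (fderiv ℝ F) := hF.fderiv_right (by exact_mod_cast le_rfl)
    set Lcomp : ((E × A) →L[ℝ] G) →L[ℝ] (E →L[ℝ] G) :=
      (ContinuousLinearMap.compL ℝ E (E × A) G).flip (ContinuousLinearMap.inl ℝ E A) with hLcomp
    ext m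
    rw [ContinuousMultilinearMap.compContinuousLinearMap_apply]
    rw [iteratedFDeriv_succ_apply_right, iteratedFDeriv_succ_apply_right]
    have heq : (fun y => fderiv ℝ (fun x => F (x, β)) y)
        = (⇑Lcomp) ∘ (fun y => fderiv ℝ F (y, β)) := by
      funext y
      simpa [hLcomp] using (slice_hasFDerivAt hFd y β).fderiv
    rw [heq]
    have hslice : ContDiff ℝ n (fun y => fderiv ℝ F (y, β)) :=
      hdF.comp (contDiff_prodMk_left β)
    rw [Lcomp.iteratedFDeriv_comp_left (hslice.contDiffAt (x := x)) le_rfl]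
    rw [ContinuousLinearMap.compContinuousMultilinearMap_coe]
    simp only [Function.comp_apply]
    rw [IH (fderiv ℝ F) hdF x β]
    simp [hLcomp, Fin.init, Function.comp]
    rfl

lemma slice_iteratedFDeriv_cont {n : ℕ} {G : Type u} [NormedAddCommGroup G] [NormedSpace ℝ G]
    {F : E × A → G} (hF : ContDiff ℝ n F) :
    Continuous (fun p : E × A => iteratedFDeriv ℝ n (fun x => F (x, p.2)) p.1) := by
  have h : (fun p : E × A => iteratedFDeriv ℝ n (fun x => F (x, p.2)) p.1)
      = (ContinuousMultilinearMap.compContinuousLinearMapL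
          (fun _ : Fin n => ContinuousLinearMap.inl ℝ E A)) ∘ (iteratedFDeriv ℝ n F) := by
    funext p
    rw [Function.comp_apply, slice_iteratedFDeriv n F hF p.1 p.2,
      ContinuousMultilinearMap.compContinuousLinearMapL_apply]
  rw [h]
  exact (ContinuousMultilinearMap.compContinuousLinearMapL _).continuous.comp
    (hF.continuous_iteratedFDeriv le_rfl)

variable [MeasurableSpace A] [OpensMeasurableSpace A] [SecondCountableTopology A]

lemma ae_mem_carrier {μ : Measure A} {C : Set A} (hμC : μ Cᶜ = 0) : ∀ᵐ β ∂μ, β ∈ C := by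
  rw [ae_iff]
  simpa [Set.compl_def] using hμC

lemma integrable_of_compact_carrier {μ : Measure A} [IsFiniteMeasure μ] {C : Set A}
    (hC : IsCompact C) (hμC : μ Cᶜ = 0) {G : Type u} [NormedAddCommGroup G]
    {f : A → G} (hf : Continuous f) : Integrable f μ := by
  obtain ⟨B, hB⟩ := hC.exists_bound_of_continuousOn hf.continuousOn
  exact (integrable_const B).mono' hf.aestronglyMeasurable
    ((ae_mem_carrier hμC).mono fun β hβ => hB β hβ)

lemma hasFDerivAt_param_integral [ProperSpace E] {μ : Measure A} [IsFiniteMeasure μ] {C : Set A}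
    (hC : IsCompact C) (hμC : μ Cᶜ = 0)
    {G : Type u} [NormedAddCommGroup G] [NormedSpace ℝ G] [CompleteSpace G]
    {F : E × A → G} (hF : ContDiff ℝ 1 F) (x₀ : E) :
    HasFDerivAt (fun x => ∫ β, F (x, β) ∂μ)
      (∫ β, (fderiv ℝ F (x₀, β)).comp (ContinuousLinearMap.inl ℝ E A) ∂μ) x₀ := by
  have hFd : Differentiable ℝ F := hF.differentiable one_ne_zero
  have hF'c : Continuous fun p : E × A =>
      (fderiv ℝ F p).comp (ContinuousLinearMap.inl ℝ E A) :=
    (hF.continuous_fderiv one_ne_zero).clm_comp continuous_const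
  obtain ⟨B, hB⟩ :=
    ((isCompact_closedBall x₀ 1).prod hC).exists_bound_of_continuousOn hF'c.continuousOn
  have hae := ae_mem_carrier (μ := μ) hμC
  apply hasFDerivAt_integral_of_dominated_of_fderiv_le
    (F' := fun x β => (fderiv ℝ F (x, β)).comp (ContinuousLinearMap.inl ℝ E A))
    (bound := fun _ => B) (ball_mem_nhds x₀ one_pos)
  · filter_upwards with x
    exact (hF.continuous.comp (continuous_const.prodMk continuous_id)).aestronglyMeasurable
  · exact integrable_of_compact_carrier hC hμC
      (hF.continuous.comp (continuous_const.prodMk continuous_id))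
  · exact (hF'c.comp (continuous_const.prodMk continuous_id)).aestronglyMeasurable
  · exact hae.mono fun β hβ x hx => hB (x, β) ⟨ball_subset_closedBall hx, hβ⟩
  · exact integrable_const B
  · exact hae.mono fun β _ x _ => slice_hasFDerivAt hFd x β

lemma param_integral_iteratedFDeriv [ProperSpace E] {μ : Measure A} [IsFiniteMeasure μ]
    {C : Set A} (hC : IsCompact C) (hμC : μ Cᶜ = 0) :
    ∀ (n : ℕ) {G : Type u} [NormedAddCommGroup G] [NormedSpace ℝ G] [CompleteSpace G]
      (F : E × A → G), ContDiff ℝ n F →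
      ContDiff ℝ n (fun x => ∫ β, F (x, β) ∂μ) ∧
      ∀ (x : E) (m : Fin n → E),
        iteratedFDeriv ℝ n (fun x => ∫ β, F (x, β) ∂μ) x m
          = ∫ β, iteratedFDeriv ℝ n (fun x' => F (x', β)) x m ∂μ := by
  intro n
  induction n with
  | zero =>
    intro G _ _ _ F hF
    have hae := ae_mem_carrier (μ := μ) hμC
    constructor
    · rw [show ((0:ℕ) : WithTop ℕ∞) = 0 from rfl, contDiff_zero]
      rw [continuous_iff_continuousAt]
      intro x₀
      obtain ⟨B, hB⟩ := ((isCompact_closedBall x₀ 1).prod hC).exists_bound_of_continuousOn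
        ((hF.continuous).continuousOn)
      apply continuousAt_of_dominated (bound := fun _ => B)
      · filter_upwards with x
        exact (hF.continuous.comp (continuous_const.prodMk continuous_id)).aestronglyMeasurable
      · filter_upwards [ball_mem_nhds x₀ one_pos] with x hx
        exact hae.mono fun β hβ => hB (x, β) ⟨ball_subset_closedBall hx, hβ⟩
      · exact integrable_const B
      · exact hae.mono fun β _ =>
          (hF.continuous.comp (continuous_id.prodMk continuous_const)).continuousAt
    · intro x m
      simp only [iteratedFDeriv_zero_apply]
  | succ n IH =>
    intro G _ _ _ F hF
    have h1 : (1 : WithTop ℕ∞) ≤ ((n+1 : ℕ) : WithTop ℕ∞) := by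
      exact_mod_cast Nat.one_le_iff_ne_zero.mpr n.succ_ne_zero
    have hFd : Differentiable ℝ F := hF.differentiable (by exact_mod_cast n.succ_ne_zero)
    have hF' : ContDiff ℝ n
        (fun p : E × A => (fderiv ℝ F p).comp (ContinuousLinearMap.inl ℝ E A)) :=
      (hF.fderiv_right (by exact_mod_cast le_rfl)).clm_comp contDiff_const
    have hder : ∀ x₀ : E, HasFDerivAt (fun x => ∫ β, F (x, β) ∂μ)
        (∫ β, (fderiv ℝ F (x₀, β)).comp (ContinuousLinearMap.inl ℝ E A) ∂μ) x₀ :=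
      fun x₀ => hasFDerivAt_param_integral hC hμC (hF.of_le h1) x₀
    have hfd : fderiv ℝ (fun x => ∫ β, F (x, β) ∂μ)
        = fun x => ∫ β, (fderiv ℝ F (x, β)).comp (ContinuousLinearMap.inl ℝ E A) ∂μ :=
      funext fun x₀ => (hder x₀).fderiv
    obtain ⟨ihA, ihB⟩ := IH _ hF'
    constructor
    · rw [show ((n+1:ℕ) : WithTop ℕ∞) = (n : WithTop ℕ∞) + 1 by exact_mod_cast rfl]
      rw [contDiff_succ_iff_fderiv]
      refine ⟨fun x => (hder x).differentiableAt, ?_, ?_⟩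
      · intro h
        exact absurd h (by simp)
      · rw [hfd]; exact ihA
    · intro x m
      rw [iteratedFDeriv_succ_apply_right]
      simp only [hfd]
      rw [ihB x (Fin.init m)]
      have hIntg : Integrable (fun β =>
          iteratedFDeriv ℝ n
            (fun x' => (fderiv ℝ F (x', β)).comp (ContinuousLinearMap.inl ℝ E A)) x
            (Fin.init m)) μ := by
        apply integrable_of_compact_carrier hC hμC
        exact (ContinuousMultilinearMap.apply ℝ _ _ (Fin.init m)).continuous.comp
          ((slice_iteratedFDeriv_cont hF').comp (continuous_const.prodMk continuous_id))
      rw [ContinuousLinearMap.integral_apply hIntg]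
      congr 1
      funext β
      rw [iteratedFDeriv_succ_apply_right]
      have hsl : (fun y => fderiv ℝ (fun x' => F (x', β)) y)
          = fun y => (fderiv ℝ F (y, β)).comp (ContinuousLinearMap.inl ℝ E A) :=
        funext fun y => (slice_hasFDerivAt hFd y β).fderiv
      rw [hsl]

end Auxiliary

/-- the continuous linear coordinate map `x ↦ x j ℓ` on `Coeff K d`. -/
def coordCLM {K : ℕ} {d : Fin K → ℕ} (j : Fin K) (ℓ : Fin (d j)) : Coeff K d →L[ℝ] ℝ :=
  (ContinuousLinearMap.proj (R := ℝ) (φ := fun _ : Fin (d j) => ℝ) ℓ).comp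
    (ContinuousLinearMap.proj (R := ℝ) (φ := fun k : Fin K => Fin (d k) → ℝ) j)

@[simp] lemma coordCLM_apply {K : ℕ} {d : Fin K → ℕ} (j : Fin K) (ℓ : Fin (d j))
    (x : Coeff K d) : coordCLM j ℓ x = x j ℓ := rfl

/-- `x ↦ idx x β` as a continuous linear map. -/
noncomputable def idxCLM {K : ℕ} {d : Fin K → ℕ} (β : Coeff K d) :
    Coeff K d →L[ℝ] (Fin K → ℝ) :=
  ContinuousLinearMap.pi (fun j => ∑ ℓ : Fin (d j), β j ℓ • coordCLM j ℓ)

lemma idxCLM_apply {K : ℕ} {d : Fin K → ℕ} (β x : Coeff K d) : idxCLM β x = idx x β := by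
  funext j
  simp [idxCLM, idx, ContinuousLinearMap.sum_apply]

/-- Proposition: when the integrated indirect utility `V` is known, every `M`-th order moment
of the random coefficients is identified by a ratio of derivatives. -/
theorem stmt11 {K : ℕ} (hK : 0 < K) {d : Fin K → ℕ} (hd : ∀ k, 0 < d k)
    (M : ℕ) (hM : 1 ≤ M)
    (ν : Measure (Coeff K d)) [IsProbabilityMeasure ν]
    (hνc : ∃ C : Set (Coeff K d), IsCompact C ∧ ν Cᶜ = 0)
    (V : (Fin K → ℝ) → ℝ) (hV : ContDiff ℝ (M + 1) V)
    (Ybar : Fin K → Coeff K d → ℝ)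
    (hYbar : ∀ k x, Ybar k x = ∫ β, pV V k (idx x β) ∂ν) :
    ∀ (τ : Fin M → Σ k : Fin K, Fin (d k)) (k : Fin K),
      dV (M + 1) V (Fin.snoc (fun m => (τ m).1) k) ≠ 0 →
      moment ν τ = dOmega M (Ybar k) τ / dV (M + 1) V (Fin.snoc (fun m => (τ m).1) k) := by
  obtain ⟨C, hC, hνC⟩ := hνc
  intro τ k hne
  classical
  have hpVc : pV V k = (ContinuousLinearMap.apply ℝ ℝ (Pi.single k 1)) ∘ (fderiv ℝ V) := rfl
  have hpV : ContDiff ℝ M (pV V k) := by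
    rw [hpVc]
    exact (ContinuousLinearMap.apply ℝ ℝ (Pi.single k 1)).contDiff.comp (hV.fderiv_right le_rfl)
  have hidx : ContDiff ℝ M (fun p : Coeff K d × Coeff K d => idx p.1 p.2) := by
    apply contDiff_pi.2
    intro j
    apply ContDiff.sum
    intro ℓ _
    exact (((coordCLM j ℓ).comp (ContinuousLinearMap.snd ℝ (Coeff K d) (Coeff K d))).contDiff).mul
      (((coordCLM j ℓ).comp (ContinuousLinearMap.fst ℝ (Coeff K d) (Coeff K d))).contDiff)
  have hFsm : ContDiff ℝ M (fun p : Coeff K d × Coeff K d => pV V k (idx p.1 p.2)) :=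
    hpV.comp hidx
  obtain ⟨-, hkey0⟩ := param_integral_iteratedFDeriv (μ := ν) hC hνC M _ hFsm
  have hkey : ∀ (x : Coeff K d) (m : Fin M → Coeff K d),
      iteratedFDeriv ℝ M (fun x => ∫ β, pV V k (idx x β) ∂ν) x m
        = ∫ β, iteratedFDeriv ℝ M (fun x' => pV V k (idx x' β)) x m ∂ν := hkey0
  -- the constant: iterated derivative of `pV V k` along the goods directions
  have hcst_eq : iteratedFDeriv ℝ M (pV V k) 0
      (fun m => (Pi.single (τ m).1 1 : Fin K → ℝ))
        = dV (M + 1) V (Fin.snoc (fun m => (τ m).1) k) := by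
    rw [hpVc, ContinuousLinearMap.iteratedFDeriv_comp_left _ (hV.fderiv_right le_rfl).contDiffAt le_rfl]
    rw [dV]
    have hsn : (fun i : Fin (M+1) =>
        (Pi.single ((Fin.snoc (fun m => (τ m).1) k : Fin (M+1) → Fin K) i) 1 : Fin K → ℝ))
        = Fin.snoc (fun m : Fin M => (Pi.single (τ m).1 1 : Fin K → ℝ)) (Pi.single k 1) := by
      funext i
      refine Fin.lastCases ?_ ?_ i
      · simp
      · intro j; simp
    rw [hsn, iteratedFDeriv_succ_apply_right]
    simp [Fin.init_snoc, Fin.snoc_last]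
  -- pointwise computation of the iterated derivative of the integrand
  have key2 : ∀ β : Coeff K d,
      iteratedFDeriv ℝ M (fun x => pV V k (idx x β)) 0
        (fun m => Pi.single (τ m).1 (Pi.single (τ m).2 1))
        = (∏ m : Fin M, β (τ m).1 (τ m).2)
            • dV (M + 1) V (Fin.snoc (fun m => (τ m).1) k) := by
    intro β
    have hcomp : (fun x : Coeff K d => pV V k (idx x β)) = (pV V k) ∘ (idxCLM β) := by
      funext x; simp [Function.comp, idxCLM_apply]
    rw [hcomp, ContinuousLinearMap.iteratedFDeriv_comp_right (idxCLM β) hpV 0 le_rfl]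
    rw [ContinuousMultilinearMap.compContinuousLinearMap_apply, map_zero]
    have hvv : (fun m : Fin M => idxCLM β (Pi.single (τ m).1 (Pi.single (τ m).2 1)))
        = fun m : Fin M =>
            (β (τ m).1 (τ m).2) • (Pi.single (τ m).1 1 : Fin K → ℝ) := by
      funext m
      rw [idxCLM_apply]
      funext j
      by_cases h : j = (τ m).1
      · subst h
        simp [idx, Pi.single_apply, mul_ite, Finset.sum_ite_eq']
      · simp [idx, Pi.single_eq_of_ne h]
    rw [hvv, ContinuousMultilinearMap.map_smul_univ, hcst_eq]
  -- assemble
  have h1 : dOmega M (Ybar k) τ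
      = iteratedFDeriv ℝ M (fun x => ∫ β, pV V k (idx x β) ∂ν) 0
          (fun m => Pi.single (τ m).1 (Pi.single (τ m).2 1)) := by
    simp only [dOmega]
    rw [show Ybar k = fun x => ∫ β, pV V k (idx x β) ∂ν from funext fun x => hYbar k x]
  have h2 := hkey 0 (fun m => Pi.single (τ m).1 (Pi.single (τ m).2 1))
  have hdO : dOmega M (Ybar k) τ
      = moment ν τ * dV (M + 1) V (Fin.snoc (fun m => (τ m).1) k) := by
    rw [h1, h2]
    simp only [key2]
    rw [integral_smul_const, moment, smul_eq_mul]
  rw [hdO, mul_div_assoc, div_self hne, mul_one]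
end
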